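/- arXiv:1911.11883 — 8 statements merged into one kernel-verified Lean document; each statement's English description precedes it below -/
import Mathlib

section
/- Let z ∈ ℂ⁸ satisfy the six manifold equations (A)-(F). Then at most two of the coordinates z₁,...,z₈ can vanish, and if two vanish they must be consecutive (indices taken modulo 8, i.e., from the cyclic set {1,...,8}). -/
/-!
Put `a i = ‖z i‖²`. The equations express each `a i` as an affine function of `x = a 4`,
`y = a 6`: they are the slacks `6 - x, 10 - x - y, 6 - y, 4 + x - y, x, x + y - 2, y, 4 - x + y`
of the eight edges of an octagon in the `(x, y)`-plane, listed in cyclic order (the moment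
polygon of the manifold). The coordinates vanishing at `z` are the edges containing the
point `(x, y)` of the octagon, and a point lies on at most two edges, which are then adjacent.
Hence the zero set of `z` is a clique in the 8-cycle, which, being bipartite, has no
clique with more than two vertices.
-/

open SimpleGraph

theorem SimpleGraph.IsClique.ncard_le_of_colorable {V : Type*} {G : SimpleGraph V} {s : Set V}
    {n : ℕ} (h : G.IsClique s) (hc : G.Colorable n) : s.ncard ≤ n := by
  rcases s.finite_or_infinite with hs | hs
  · obtain ⟨t, rfl⟩ := hs.exists_finset_coe
    rw [Set.ncard_coe_finset]
    exact h.card_le_of_colorable hc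
  · simp [hs.ncard]

theorem SimpleGraph.cycleGraph_colorable_two {n : ℕ} (hn : Even n) :
    (cycleGraph n).Colorable 2 :=
  (cycleGraph.bicoloring_of_even n hn).colorable

theorem SimpleGraph.cycleGraph_adj_iff_add_one {n : ℕ} {u v : Fin (n + 2)} :
    (cycleGraph (n + 2)).Adj u v ↔ u + 1 = v ∨ v + 1 = u := by
  rw [cycleGraph_adj, sub_eq_iff_eq_add', sub_eq_iff_eq_add', or_comm, eq_comm, eq_comm (a := u)]

theorem isClique_cycleGraph_setOf_eq_zero (a : Fin 8 → ℝ) (ha : ∀ i, 0 ≤ a i)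
    (hA : a 0 + a 4 = 6) (hB : a 1 + a 4 + a 6 = 10) (hC : a 2 + a 6 = 6)
    (hD : a 3 - a 4 + a 6 = 4) (hE : a 4 - a 5 + a 6 = 2) (hF : a 4 - a 6 + a 7 = 4) :
    (cycleGraph 8).IsClique {i | a i = 0} := by
  intro j hj k hk hne
  fin_cases j <;> fin_cases k <;> simp_all <;>
    first
      | decide
      | linarith [ha 0, ha 1, ha 2, ha 3, ha 4, ha 5, ha 6, ha 7]

/-- If z ∈ ℂ⁸ satisfies the six manifold equations, then at most two coordinates vanish,
and if two distinct coordinates vanish they are consecutive modulo 8. -/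
theorem at_most_two_consecutive_zeros (z : Fin 8 → ℂ)
    (hA : ‖z 0‖ ^ 2 + ‖z 4‖ ^ 2 = 6)
    (hB : ‖z 1‖ ^ 2 + ‖z 4‖ ^ 2 + ‖z 6‖ ^ 2 = 10)
    (hC : ‖z 2‖ ^ 2 + ‖z 6‖ ^ 2 = 6)
    (hD : ‖z 3‖ ^ 2 - ‖z 4‖ ^ 2 + ‖z 6‖ ^ 2 = 4)
    (hE : ‖z 4‖ ^ 2 - ‖z 5‖ ^ 2 + ‖z 6‖ ^ 2 = 2)
    (hF : ‖z 4‖ ^ 2 - ‖z 6‖ ^ 2 + ‖z 7‖ ^ 2 = 4) :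
    Set.ncard {i : Fin 8 | z i = 0} ≤ 2 ∧
    ∀ j k : Fin 8, z j = 0 → z k = 0 → j ≠ k → (j + 1 = k ∨ k + 1 = j) := by
  have hzeros : {i : Fin 8 | z i = 0} = {i | ‖z i‖ ^ 2 = 0} := by simp
  have hclique : (cycleGraph 8).IsClique {i : Fin 8 | z i = 0} := hzeros ▸
    isClique_cycleGraph_setOf_eq_zero (fun i ↦ ‖z i‖ ^ 2) (fun i ↦ sq_nonneg _) hA hB hC hD hE hF
  refine ⟨hclique.ncard_le_of_colorable (cycleGraph_colorable_two ⟨4, rfl⟩), ?_⟩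
  intro j k hj hk hne
  exact cycleGraph_adj_iff_add_one.mp (hclique hj hk hne)
end

section
/- Let z ∈ ℂ⁸ satisfy the six manifold equations (A)-(F) and set J = |z₁|²/2 and H = |z₃|²/2. Then 0 ≤ J ≤ 3, 0 ≤ H ≤ 3, H ≥ 1 - J, H ≤ 2 + J, H ≥ J - 2, and H ≤ 5 - J; that is, (J,H) lies in the octagon Δ obtained from [0,3]² by chopping off its corners. -/
/-!
With a = |z₅|² and c = |z₇|², equations (A) and (C) give J = 3 - a/2 and H = 3 - c/2. Each edge
of the octagon is then the nonnegativity of a single |zᵢ|², read through one equation: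
|z₁|² and |z₅|² bound J, |z₃|² and |z₇|² bound H, and the four chopped corners come from
|z₂|² in (B), |z₈|² in (F), |z₄|² in (D) and |z₆|² in (E).
-/

/-- If z ∈ ℂ⁸ satisfies the six manifold equations, then (J,H) = (|z₁|²/2, |z₃|²/2)
lies in the octagon Δ obtained from the square [0,3]² by chopping off the corners. -/
theorem JH_in_octagon (z : Fin 8 → ℂ)
    (hA : ‖z 0‖ ^ 2 + ‖z 4‖ ^ 2 = 6)
    (hB : ‖z 1‖ ^ 2 + ‖z 4‖ ^ 2 + ‖z 6‖ ^ 2 = 10)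
    (hC : ‖z 2‖ ^ 2 + ‖z 6‖ ^ 2 = 6)
    (hD : ‖z 3‖ ^ 2 - ‖z 4‖ ^ 2 + ‖z 6‖ ^ 2 = 4)
    (hE : ‖z 4‖ ^ 2 - ‖z 5‖ ^ 2 + ‖z 6‖ ^ 2 = 2)
    (hF : ‖z 4‖ ^ 2 - ‖z 6‖ ^ 2 + ‖z 7‖ ^ 2 = 4)
    (J H : ℝ)
    (hJ : J = ‖z 0‖ ^ 2 / 2)
    (hH : H = ‖z 2‖ ^ 2 / 2) :
    0 ≤ J ∧ J ≤ 3 ∧ 0 ≤ H ∧ H ≤ 3 ∧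
    1 - J ≤ H ∧ H ≤ 2 + J ∧ J - 2 ≤ H ∧ H ≤ 5 - J := by
  have hnonneg (i : Fin 8) : 0 ≤ ‖z i‖ ^ 2 := sq_nonneg _
  refine ⟨?_, ?_, ?_, ?_, ?_, ?_, ?_, ?_⟩
  · linarith [hnonneg 0]
  · linarith [hnonneg 4]
  · linarith [hnonneg 2]
  · linarith [hnonneg 6]
  · linarith [hnonneg 1]
  · linarith [hnonneg 7]
  · linarith [hnonneg 3]
  · linarith [hnonneg 5]
end

section
/- Conversely, for every (j,h) in the octagon Δ = {(j,h) : 0 ≤ j ≤ 3, 0 ≤ h ≤ 3, h ≥ 1-j, h ≤ 2+j, h ≥ j-2, h ≤ 5-j}, there exists z ∈ ℂ⁸ (which can be chosen with all coordinates real and nonnegative) satisfying the manifold equations (A)-(F) with |z₁|² = 2j and |z₃|² = 2h. -/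
/-!
The equations (A)–(F) are linear in the squared moduli `‖zᵢ‖²`, and together with
`‖z₁‖² = 2j`, `‖z₃‖² = 2h` they determine all eight of them as affine functions of `(j, h)`.
Each of these eight values is nonnegative by exactly one of the eight inequalities cutting
out Δ, so the nonnegative square roots give the required point.
-/

theorem Complex.exists_nonneg_real_norm_sq_eq {ι : Type*} (v : ι → ℝ) (hv : ∀ i, 0 ≤ v i) :
    ∃ z : ι → ℂ, (∀ i, ∃ r : ℝ, 0 ≤ r ∧ z i = r) ∧ ∀ i, ‖z i‖ ^ 2 = v i :=
  ⟨fun i => (√(v i) : ℂ), fun i => ⟨√(v i), Real.sqrt_nonneg _, rfl⟩, fun i => by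
    rw [Complex.norm_real, Real.norm_eq_abs, sq_abs, Real.sq_sqrt (hv i)]⟩

def octagonSquaredModuli (j h : ℝ) : Fin 8 → ℝ :=
  ![2 * j, 2 * j + 2 * h - 2, 2 * h, 4 - 2 * j + 2 * h, 6 - 2 * j, 10 - 2 * j - 2 * h,
    6 - 2 * h, 4 + 2 * j - 2 * h]

lemma octagonSquaredModuli_nonneg {j h : ℝ}
    (h1 : 0 ≤ j) (h2 : j ≤ 3) (h3 : 0 ≤ h) (h4 : h ≤ 3)
    (h5 : 1 - j ≤ h) (h6 : h ≤ 2 + j) (h7 : j - 2 ≤ h) (h8 : h ≤ 5 - j) (i : Fin 8) :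
    0 ≤ octagonSquaredModuli j h i := by
  fin_cases i <;> simp [octagonSquaredModuli] <;> linarith

/-- For every (j,h) in the octagon Δ there exists z ∈ ℂ⁸, with all coordinates real and
nonnegative, satisfying the six manifold equations and |z₁|² = 2j, |z₃|² = 2h. -/
theorem octagon_point_has_preimage (j h : ℝ)
    (h1 : 0 ≤ j) (h2 : j ≤ 3) (h3 : 0 ≤ h) (h4 : h ≤ 3)
    (h5 : 1 - j ≤ h) (h6 : h ≤ 2 + j) (h7 : j - 2 ≤ h) (h8 : h ≤ 5 - j) :
    ∃ z : Fin 8 → ℂ,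
      (∀ i, ∃ r : ℝ, 0 ≤ r ∧ z i = (r : ℂ)) ∧
      ‖z 0‖ ^ 2 + ‖z 4‖ ^ 2 = 6 ∧
      ‖z 1‖ ^ 2 + ‖z 4‖ ^ 2 + ‖z 6‖ ^ 2 = 10 ∧
      ‖z 2‖ ^ 2 + ‖z 6‖ ^ 2 = 6 ∧
      ‖z 3‖ ^ 2 - ‖z 4‖ ^ 2 + ‖z 6‖ ^ 2 = 4 ∧
      ‖z 4‖ ^ 2 - ‖z 5‖ ^ 2 + ‖z 6‖ ^ 2 = 2 ∧
      ‖z 4‖ ^ 2 - ‖z 6‖ ^ 2 + ‖z 7‖ ^ 2 = 4 ∧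
      ‖z 0‖ ^ 2 = 2 * j ∧
      ‖z 2‖ ^ 2 = 2 * h := by
  obtain ⟨z, hz_real, hz⟩ := Complex.exists_nonneg_real_norm_sq_eq (octagonSquaredModuli j h)
    (octagonSquaredModuli_nonneg h1 h2 h3 h4 h5 h6 h7 h8)
  refine ⟨z, hz_real, ?_⟩
  simp only [hz, octagonSquaredModuli, Matrix.cons_val, and_true]
  and_intros <;> ring
end

section
/- Let z ∈ ℂ⁸ satisfy the manifold equations (A)-(F), let J = |z₁|²/2, H = |z₃|²/2, and Z = conj(z₂)·conj(z₃)·conj(z₄)·z₆·z₇·z₈ with X = Re(Z) and Y = Im(Z). Then X² + Y² = 2⁶ · H·(H+J-1)·(H-J+2)·(-H-J+5)·(3-H)·(2-H+J). -/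
/-! Since `Z` is a product of six coordinates or their conjugates, `X² + Y² = |Z|²` is the
product of the six squared moduli `|zᵢ|²`. Equations (A)–(F) express each of these as an affine
function of `J` and `H`, and multiplying the six factors gives the formula. -/

theorem Complex.re_sq_add_im_sq (w : ℂ) : w.re ^ 2 + w.im ^ 2 = ‖w‖ ^ 2 := by
  rw [Complex.sq_norm, Complex.normSq_apply]
  ring

/-- For z ∈ ℂ⁸ satisfying the six manifold equations, with J = |z₁|²/2, H = |z₃|²/2 and
Z = conj(z₂)conj(z₃)conj(z₄)z₆z₇z₈, X = Re Z, Y = Im Z, we have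
X² + Y² = 2⁶ · H(H+J-1)(H-J+2)(-H-J+5)(3-H)(2-H+J). -/
theorem X_sq_add_Y_sq (z : Fin 8 → ℂ)
    (hA : ‖z 0‖ ^ 2 + ‖z 4‖ ^ 2 = 6)
    (hB : ‖z 1‖ ^ 2 + ‖z 4‖ ^ 2 + ‖z 6‖ ^ 2 = 10)
    (hC : ‖z 2‖ ^ 2 + ‖z 6‖ ^ 2 = 6)
    (hD : ‖z 3‖ ^ 2 - ‖z 4‖ ^ 2 + ‖z 6‖ ^ 2 = 4)
    (hE : ‖z 4‖ ^ 2 - ‖z 5‖ ^ 2 + ‖z 6‖ ^ 2 = 2)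
    (hF : ‖z 4‖ ^ 2 - ‖z 6‖ ^ 2 + ‖z 7‖ ^ 2 = 4)
    (J H X Y : ℝ)
    (hJ : J = ‖z 0‖ ^ 2 / 2)
    (hH : H = ‖z 2‖ ^ 2 / 2)
    (hX : X = ((starRingEnd ℂ) (z 1) * (starRingEnd ℂ) (z 2) * (starRingEnd ℂ) (z 3) *
      z 5 * z 6 * z 7).re)
    (hY : Y = ((starRingEnd ℂ) (z 1) * (starRingEnd ℂ) (z 2) * (starRingEnd ℂ) (z 3) *
      z 5 * z 6 * z 7).im) :
    X ^ 2 + Y ^ 2 =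
      2 ^ 6 * H * (H + J - 1) * (H - J + 2) * (-H - J + 5) * (3 - H) * (2 - H + J) := by
  have h1 : ‖z 1‖ ^ 2 = 2 * H + 2 * J - 2 := by linarith
  have h2 : ‖z 2‖ ^ 2 = 2 * H := by linarith
  have h3 : ‖z 3‖ ^ 2 = 2 * H - 2 * J + 4 := by linarith
  have h5 : ‖z 5‖ ^ 2 = 10 - 2 * J - 2 * H := by linarith
  have h6 : ‖z 6‖ ^ 2 = 6 - 2 * H := by linarith
  have h7 : ‖z 7‖ ^ 2 = 4 + 2 * J - 2 * H := by linarith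
  rw [hX, hY, Complex.re_sq_add_im_sq]
  simp only [norm_mul, Complex.norm_conj, mul_pow]
  rw [h1, h2, h3, h5, h6, h7]
  ring
end

section
/- The function Z: ℂ⁸ → ℂ, Z(z) = conj(z₂)·conj(z₃)·conj(z₄)·z₆·z₇·z₈, is invariant under the 6-torus action (t₁,...,t₆)·z = (e^{it₁}z₁, e^{it₂}z₂, e^{it₃}z₃, e^{it₄}z₄, e^{i(t₁+t₂-t₄-t₅+t₆)}z₅, e^{it₅}z₆, e^{i(t₂+t₃+t₄-t₅-t₆)}z₇, e^{it₆}z₈), and also invariant under the circle action s·z = (e^{-is}z₁, z₂,...,z₈). -/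
open Complex

/-- The function Z(z) = conj(z₂)conj(z₃)conj(z₄)z₆z₇z₈ on ℂ⁸. -/
def Zmap (z : Fin 8 → ℂ) : ℂ :=
  (starRingEnd ℂ) (z 1) * (starRingEnd ℂ) (z 2) * (starRingEnd ℂ) (z 3) * z 5 * z 6 * z 7

open scoped ComplexConjugate

/-!
Scaling the coordinates of `z` by `a, …, h` multiplies `Z(z)` by `conj b conj c conj d f g h`.
For the torus action this factor is `exp (i θ)` with
`θ = -t₂ - t₃ - t₄ + t₅ + (t₂ + t₃ + t₄ - t₅ - t₆) + t₆ = 0`;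
for the circle action only the first coordinate is scaled, and `Z` does not involve it.
-/

theorem Zmap_diagonal_mul (a b c d e f g h : ℂ) (z : Fin 8 → ℂ) :
    Zmap ![a * z 0, b * z 1, c * z 2, d * z 3, e * z 4, f * z 5, g * z 6, h * z 7] =
      conj b * conj c * conj d * f * g * h * Zmap z := by
  simp only [Zmap, Matrix.cons_val, map_mul]
  ring

/-- Z is invariant under the given 6-torus action on ℂ⁸ and under the circle action
s·z = (e^{-is}z₁, z₂, …, z₈). -/
theorem Zmap_invariant (t₁ t₂ t₃ t₄ t₅ t₆ s : ℝ) (z : Fin 8 → ℂ) :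
    Zmap ![Complex.exp (t₁ * I) * z 0, Complex.exp (t₂ * I) * z 1,
          Complex.exp (t₃ * I) * z 2, Complex.exp (t₄ * I) * z 3,
          Complex.exp ((t₁ + t₂ - t₄ - t₅ + t₆) * I) * z 4,
          Complex.exp (t₅ * I) * z 5,
          Complex.exp ((t₂ + t₃ + t₄ - t₅ - t₆) * I) * z 6,
          Complex.exp (t₆ * I) * z 7] = Zmap z ∧
    Zmap ![Complex.exp (-s * I) * z 0, z 1, z 2, z 3, z 4, z 5, z 6, z 7] = Zmap z := by
  constructor
  · have hweight : conj (exp (t₂ * I)) * conj (exp (t₃ * I)) * conj (exp (t₄ * I)) *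
        exp (t₅ * I) * exp ((t₂ + t₃ + t₄ - t₅ - t₆) * I) * exp (t₆ * I) = 1 := by
      simp only [← exp_conj, map_mul, conj_ofReal, conj_I, ← exp_add]
      rw [← exp_zero]
      congr 1
      ring
    rw [Zmap_diagonal_mul, hweight, one_mul]
  · simpa using Zmap_diagonal_mul (exp (-s * I)) 1 1 1 1 1 1 1 z
end

section
/- Let z ∈ ℂ⁸ satisfy the manifold equations (A)-(F) with |z₁|² = 2 (so J(z) = 1), and suppose Re(conj(z₂)·conj(z₃)·conj(z₄)·z₆·z₇·z₈) = 0 and z₂,z₃,z₄,z₆ ≠ 0 and all of z₂,z₃,z₄,z₆ as well as z₁,z₅ are real and positive. Then |z₇| = |z₈|, |z₈|² ≤ 6, and z₇ = i·conj(z₈) or z₇ = -i·conj(z₈). -/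
/-!
Equations (A) and |z₁|² = 2 give |z₅|² = 4, so (F) gives |z₇| = |z₈| and (B) gives
|z₈|² = 6 - |z₂|² ≤ 6. The conjugated prefactor conj(z₂)conj(z₃)conj(z₄)z₆ is a positive real,
so Re(z₇z₈) = 0. For w = z₇z₈ and |z₇| = |z₈| one then has
(z₇² + conj(z₈)²)·z₈² = w² + w·conj(w) = 2w·Re(w) = 0, hence z₇² = (i·conj z₈)².
-/

open ComplexConjugate
open scoped ComplexOrder

namespace Complex

theorem re_eq_zero_of_pos_of_re_mul_eq_zero {r w : ℂ} (hr : 0 < r) (h : (r * w).re = 0) :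
    w.re = 0 := by
  obtain ⟨hre, him⟩ := pos_iff.mp hr
  rw [mul_re, ← him, zero_mul, sub_zero] at h
  exact (mul_eq_zero.mp h).resolve_left hre.ne'

theorem sq_add_conj_sq_eq_zero_of_norm_eq {u v : ℂ} (hnorm : ‖u‖ = ‖v‖) (hre : (u * v).re = 0) :
    u ^ 2 + conj v ^ 2 = 0 := by
  have hsq : (conj v * v) ^ 2 = u * v * conj (u * v) := by
    rw [conj_mul', mul_conj', norm_mul, hnorm]
    push_cast
    ring
  have hw : u * v * (u * v + conj (u * v)) = 0 := by
    rw [add_conj, hre]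
    simp
  have hmul : (u ^ 2 + conj v ^ 2) * v ^ 2 = 0 := by linear_combination hsq + hw
  rcases mul_eq_zero.mp hmul with h | hv
  · exact h
  · have hv : v = 0 := pow_eq_zero_iff two_ne_zero |>.mp hv
    have hu : u = 0 := norm_eq_zero.mp (by rw [hnorm, hv, norm_zero])
    simp [hu, hv]

theorem eq_I_mul_conj_or_eq_neg_of_norm_eq {u v : ℂ} (hnorm : ‖u‖ = ‖v‖)
    (hre : (u * v).re = 0) : u = I * conj v ∨ u = -(I * conj v) :=
  sq_eq_sq_iff_eq_or_eq_neg.mp <| by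
    linear_combination sq_add_conj_sq_eq_zero_of_norm_eq hnorm hre - conj v ^ 2 * I_sq

end Complex

theorem fibre_structure_general (z : Fin 8 → ℂ)
    (hA : ‖z 0‖ ^ 2 + ‖z 4‖ ^ 2 = 6)
    (hB : ‖z 1‖ ^ 2 + ‖z 4‖ ^ 2 + ‖z 6‖ ^ 2 = 10)
    (hF : ‖z 4‖ ^ 2 - ‖z 6‖ ^ 2 + ‖z 7‖ ^ 2 = 4)
    (hJ : ‖z 0‖ ^ 2 = 2)
    (hX : ((starRingEnd ℂ) (z 1) * (starRingEnd ℂ) (z 2) * (starRingEnd ℂ) (z 3) *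
      z 5 * z 6 * z 7).re = 0)
    (hreal : ∀ i : Fin 8, i.val ≤ 5 → (z i).im = 0 ∧ 0 < (z i).re) :
    ‖z 6‖ = ‖z 7‖ ∧
    ‖z 7‖ ^ 2 ≤ 6 ∧
    (z 6 = Complex.I * (starRingEnd ℂ) (z 7) ∨
     z 6 = -(Complex.I * (starRingEnd ℂ) (z 7))) := by
  have hsq : ‖z 6‖ ^ 2 = ‖z 7‖ ^ 2 := by linarith
  have hnorm : ‖z 6‖ = ‖z 7‖ := (pow_left_inj₀ (norm_nonneg _) (norm_nonneg _) two_ne_zero).mp hsq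
  have hpos (i : Fin 8) (hi : i.val ≤ 5) : 0 < z i :=
    Complex.pos_iff.mpr ⟨(hreal i hi).2, (hreal i hi).1.symm⟩
  have hconj (i : Fin 8) (hi : i.val ≤ 5) : conj (z i) = z i :=
    Complex.conj_eq_iff_im.mpr (hreal i hi).1
  rw [hconj 1 (by decide), hconj 2 (by decide), hconj 3 (by decide)] at hX
  have hre : (z 6 * z 7).re = 0 := by
    refine Complex.re_eq_zero_of_pos_of_re_mul_eq_zero (r := z 1 * z 2 * z 3 * z 5) ?_ ?_
    · exact mul_pos (mul_pos (mul_pos (hpos 1 (by decide)) (hpos 2 (by decide)))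
        (hpos 3 (by decide))) (hpos 5 (by decide))
    · simpa only [mul_assoc] using hX
  exact ⟨hnorm, by linarith [sq_nonneg ‖z 1‖],
    Complex.eq_I_mul_conj_or_eq_neg_of_norm_eq hnorm hre⟩

/-- Let z ∈ ℂ⁸ satisfy the six manifold equations with |z₁|² = 2 (so J(z) = 1), suppose
Re(conj(z₂)conj(z₃)conj(z₄)z₆z₇z₈) = 0, and suppose z₁,…,z₆ are real and strictly positive
(in particular nonzero). Then |z₇| = |z₈|, |z₈|² ≤ 6, and z₇ = ± i·conj(z₈). -/
theorem fibre_structure (z : Fin 8 → ℂ)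
    (hA : ‖z 0‖ ^ 2 + ‖z 4‖ ^ 2 = 6)
    (hB : ‖z 1‖ ^ 2 + ‖z 4‖ ^ 2 + ‖z 6‖ ^ 2 = 10)
    (hC : ‖z 2‖ ^ 2 + ‖z 6‖ ^ 2 = 6)
    (hD : ‖z 3‖ ^ 2 - ‖z 4‖ ^ 2 + ‖z 6‖ ^ 2 = 4)
    (hE : ‖z 4‖ ^ 2 - ‖z 5‖ ^ 2 + ‖z 6‖ ^ 2 = 2)
    (hF : ‖z 4‖ ^ 2 - ‖z 6‖ ^ 2 + ‖z 7‖ ^ 2 = 4)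
    (hJ : ‖z 0‖ ^ 2 = 2)
    (hX : ((starRingEnd ℂ) (z 1) * (starRingEnd ℂ) (z 2) * (starRingEnd ℂ) (z 3) *
      z 5 * z 6 * z 7).re = 0)
    (hreal : ∀ i : Fin 8, i.val ≤ 5 → (z i).im = 0 ∧ 0 < (z i).re) :
    ‖z 6‖ = ‖z 7‖ ∧
    ‖z 7‖ ^ 2 ≤ 6 ∧
    (z 6 = Complex.I * (starRingEnd ℂ) (z 7) ∨
     z 6 = -(Complex.I * (starRingEnd ℂ) (z 7))) :=
  fibre_structure_general z hA hB hF hJ hX hreal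
end

section
/- For every r ∈ [0, √6] and θ ∈ [0, 2π) and each choice of sign ±, the point z = (√2, √(6-r²), √(6-r²), √(8-r²), 2, √(2+r²), ±r·i·e^{-iθ}, r·e^{iθ}) ∈ ℂ⁸ satisfies the six manifold equations (A)-(F), has |z₁|²/2 = 1, and satisfies Re(conj(z₂)·conj(z₃)·conj(z₄)·z₆·z₇·z₈) = 0. -/
open Complex Real

/-!
All moduli except those of `z₇`, `z₈` are square roots of real numbers that are nonnegative as
soon as `r² ≤ 6`, and `|z₇| = |z₈| = r` because `ε² = 1` and `|e^{±iθ}| = 1`; the six equations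
are then linear identities in `r²`. In the last product the phases of `z₇` and `z₈` cancel, so it
equals the real number `√(6-r²)² √(8-r²) √(2+r²) ε r²` times `i`.
-/

lemma norm_ofReal_sq (x : ℝ) : ‖(x : ℂ)‖ ^ 2 = x ^ 2 := by
  rw [Complex.norm_real, Real.norm_eq_abs, sq_abs]

lemma norm_ofReal_sqrt_sq {x : ℝ} (hx : 0 ≤ x) : ‖(√x : ℂ)‖ ^ 2 = x := by
  rw [norm_ofReal_sq, Real.sq_sqrt hx]

lemma norm_ofReal_mul_exp_mul_I_sq (a θ : ℝ) : ‖(a : ℂ) * exp (θ * I)‖ ^ 2 = a ^ 2 := by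
  rw [norm_mul, norm_exp_ofReal_mul_I, mul_one, norm_ofReal_sq]

theorem pinched_torus_parametrisation_general (r θ : ℝ) (ε : ℝ)
    (hr : 0 ≤ r) (hr' : r ≤ Real.sqrt 6)
    (hε : ε = 1 ∨ ε = -1) :
    let z : Fin 8 → ℂ :=
      ![(Real.sqrt 2 : ℂ), (Real.sqrt (6 - r ^ 2) : ℂ), (Real.sqrt (6 - r ^ 2) : ℂ),
        (Real.sqrt (8 - r ^ 2) : ℂ), (2 : ℂ), (Real.sqrt (2 + r ^ 2) : ℂ),
        (ε : ℂ) * (r : ℂ) * Complex.I * Complex.exp (-(θ : ℂ) * Complex.I),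
        (r : ℂ) * Complex.exp ((θ : ℂ) * Complex.I)]
    ‖z 0‖ ^ 2 + ‖z 4‖ ^ 2 = 6 ∧
    ‖z 1‖ ^ 2 + ‖z 4‖ ^ 2 + ‖z 6‖ ^ 2 = 10 ∧
    ‖z 2‖ ^ 2 + ‖z 6‖ ^ 2 = 6 ∧
    ‖z 3‖ ^ 2 - ‖z 4‖ ^ 2 + ‖z 6‖ ^ 2 = 4 ∧
    ‖z 4‖ ^ 2 - ‖z 5‖ ^ 2 + ‖z 6‖ ^ 2 = 2 ∧
    ‖z 4‖ ^ 2 - ‖z 6‖ ^ 2 + ‖z 7‖ ^ 2 = 4 ∧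
    ‖z 0‖ ^ 2 / 2 = 1 ∧
    ((starRingEnd ℂ) (z 1) * (starRingEnd ℂ) (z 2) * (starRingEnd ℂ) (z 3) *
      z 5 * z 6 * z 7).re = 0 := by
  intro z
  have hr6 : r ^ 2 ≤ 6 := (Real.le_sqrt hr (by norm_num)).mp hr'
  have hε2 : ε ^ 2 = 1 := by rcases hε with rfl | rfl <;> norm_num
  have h0 : ‖z 0‖ ^ 2 = 2 := norm_ofReal_sqrt_sq (by norm_num)
  have h1 : ‖z 1‖ ^ 2 = 6 - r ^ 2 := norm_ofReal_sqrt_sq (by linarith)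
  have h2 : ‖z 2‖ ^ 2 = 6 - r ^ 2 := norm_ofReal_sqrt_sq (by linarith)
  have h3 : ‖z 3‖ ^ 2 = 8 - r ^ 2 := norm_ofReal_sqrt_sq (by linarith)
  have h4 : ‖z 4‖ ^ 2 = 4 := show ‖(2 : ℂ)‖ ^ 2 = 4 by norm_num
  have h5 : ‖z 5‖ ^ 2 = 2 + r ^ 2 := norm_ofReal_sqrt_sq (by positivity)
  have h6 : ‖z 6‖ ^ 2 = r ^ 2 := by
    have hz6 : z 6 = ((ε * r : ℝ) : ℂ) * exp ((-θ : ℝ) * I) * I := by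
      simp only [z]; push_cast; ring
    rw [hz6, norm_mul, Complex.norm_I, mul_one, norm_ofReal_mul_exp_mul_I_sq, mul_pow, hε2,
      one_mul]
  have h7 : ‖z 7‖ ^ 2 = r ^ 2 := norm_ofReal_mul_exp_mul_I_sq r θ
  refine ⟨by linarith, by linarith, by linarith, by linarith, by linarith, by linarith,
    by linarith, ?_⟩
  have hprod : (starRingEnd ℂ) (z 1) * (starRingEnd ℂ) (z 2) * (starRingEnd ℂ) (z 3) *
      z 5 * z 6 * z 7 =
      ((√(6 - r ^ 2) * √(6 - r ^ 2) * √(8 - r ^ 2) * √(2 + r ^ 2) * ε * r * r : ℝ) : ℂ) * I := by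
    have hphase : exp (-θ * I) * exp (θ * I) = 1 := by
      rw [neg_mul, Complex.exp_neg, inv_mul_cancel₀ (Complex.exp_ne_zero _)]
    simp only [z, Matrix.cons_val, conj_ofReal]
    push_cast
    linear_combination (√(6 - r ^ 2) * √(6 - r ^ 2) * √(8 - r ^ 2) * √(2 + r ^ 2) * ε * r * r
      * I : ℂ) * hphase
  rw [hprod, re_ofReal_mul, I_re, mul_zero]

/-- For every r ∈ [0,√6], θ ∈ [0,2π) and each sign ε = ±1, the point
z = (√2, √(6-r²), √(6-r²), √(8-r²), 2, √(2+r²), ε·r·i·e^{-iθ}, r·e^{iθ}) satisfies the six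
manifold equations, has |z₁|²/2 = 1, and Re(conj(z₂)conj(z₃)conj(z₄)z₆z₇z₈) = 0. -/
theorem pinched_torus_parametrisation (r θ : ℝ) (ε : ℝ)
    (hr : 0 ≤ r) (hr' : r ≤ Real.sqrt 6) (hθ : 0 ≤ θ) (hθ' : θ < 2 * Real.pi)
    (hε : ε = 1 ∨ ε = -1) :
    let z : Fin 8 → ℂ :=
      ![(Real.sqrt 2 : ℂ), (Real.sqrt (6 - r ^ 2) : ℂ), (Real.sqrt (6 - r ^ 2) : ℂ),
        (Real.sqrt (8 - r ^ 2) : ℂ), (2 : ℂ), (Real.sqrt (2 + r ^ 2) : ℂ),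
        (ε : ℂ) * (r : ℂ) * Complex.I * Complex.exp (-(θ : ℂ) * Complex.I),
        (r : ℂ) * Complex.exp ((θ : ℂ) * Complex.I)]
    ‖z 0‖ ^ 2 + ‖z 4‖ ^ 2 = 6 ∧
    ‖z 1‖ ^ 2 + ‖z 4‖ ^ 2 + ‖z 6‖ ^ 2 = 10 ∧
    ‖z 2‖ ^ 2 + ‖z 6‖ ^ 2 = 6 ∧
    ‖z 3‖ ^ 2 - ‖z 4‖ ^ 2 + ‖z 6‖ ^ 2 = 4 ∧
    ‖z 4‖ ^ 2 - ‖z 5‖ ^ 2 + ‖z 6‖ ^ 2 = 2 ∧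
    ‖z 4‖ ^ 2 - ‖z 6‖ ^ 2 + ‖z 7‖ ^ 2 = 4 ∧
    ‖z 0‖ ^ 2 / 2 = 1 ∧
    ((starRingEnd ℂ) (z 1) * (starRingEnd ℂ) (z 2) * (starRingEnd ℂ) (z 3) *
      z 5 * z 6 * z 7).re = 0 :=
  pinched_torus_parametrisation_general r θ ε hr hr' hε
end

section
/- The polynomial 𝒫(u) = 24u²⁰ - 240u¹⁸ - 1044u¹⁶ + 14112u¹⁴ - 6624u¹² - 173952u¹⁰ + 193728u⁸ + 678912u⁶ - 995328u⁴ - 589824 is strictly negative for all u ∈ [-√2, √2]; its maximum on this interval is 𝒫(0) = 𝒫(±√2) = -589824 and its minimum is 𝒫(±1) = -880236. -/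
/-!
𝒫 is even, so 𝒫(u) = Q(u²) for a degree-ten polynomial Q, and it suffices to study Q on [0, 2].
There Q + 589824 = x²(x - 2)² U(x) and Q + 880236 = (x - 1)² W(x), where the cofactors satisfy
U ≤ 0 ≤ W on [0, 2] (Positivstellensatz certificates built from powers of x and 2 - x).
-/

namespace PStrictlyNegative

def Q (x : ℝ) : ℝ :=
  24 * x ^ 10 - 240 * x ^ 9 - 1044 * x ^ 8 + 14112 * x ^ 7 - 6624 * x ^ 6 - 173952 * x ^ 5 +
    193728 * x ^ 4 + 678912 * x ^ 3 - 995328 * x ^ 2 - 589824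

def U (x : ℝ) : ℝ :=
  24 * x ^ 6 - 144 * x ^ 5 - 1716 * x ^ 4 + 7824 * x ^ 3 + 31536 * x ^ 2 - 79104 * x - 248832

def W (x : ℝ) : ℝ :=
  24 * x ^ 8 - 192 * x ^ 7 - 1452 * x ^ 6 + 11400 * x ^ 5 + 17628 * x ^ 4 - 150096 * x ^ 3 -
    124092 * x ^ 2 + 580824 * x + 290412

theorem Q_add_eq_mul_U (x : ℝ) : Q x + 589824 = x ^ 2 * (x - 2) ^ 2 * U x := by
  unfold Q U; ring

theorem Q_add_eq_mul_W (x : ℝ) : Q x + 880236 = (x - 1) ^ 2 * W x := by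
  unfold Q W; ring

theorem U_nonpos {x : ℝ} (h0 : 0 ≤ x) (h2 : x ≤ 2) : U x ≤ 0 := by
  have h2' := sub_nonneg.2 h2
  unfold U
  nlinarith [pow_nonneg h0 2, pow_nonneg h0 3, pow_nonneg h0 4, pow_nonneg h0 5,
    mul_nonneg (pow_nonneg h0 2) h2', mul_nonneg (pow_nonneg h0 4) h2', sq_nonneg (x - 2)]

theorem W_nonneg {x : ℝ} (h0 : 0 ≤ x) (h2 : x ≤ 2) : 0 ≤ W x := by
  have h2' := sub_nonneg.2 h2
  unfold W
  nlinarith [mul_nonneg h0 h2', mul_nonneg (pow_nonneg h0 2) h2',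
    mul_nonneg (pow_nonneg h0 3) h2', mul_nonneg (pow_nonneg h0 4) h2',
    mul_nonneg (pow_nonneg h0 5) h2', mul_nonneg (pow_nonneg h0 6) h2',
    mul_nonneg (mul_nonneg h0 h2') (mul_nonneg h0 h2'),
    pow_nonneg h0 2, pow_nonneg h0 3, pow_nonneg h0 4, pow_nonneg h0 6, sq_nonneg (x - 1)]

theorem Q_le {x : ℝ} (h0 : 0 ≤ x) (h2 : x ≤ 2) : Q x ≤ -589824 := by
  have := mul_nonpos_of_nonneg_of_nonpos (by positivity : 0 ≤ x ^ 2 * (x - 2) ^ 2)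
    (U_nonpos h0 h2)
  linarith [Q_add_eq_mul_U x]

theorem le_Q {x : ℝ} (h0 : 0 ≤ x) (h2 : x ≤ 2) : -880236 ≤ Q x := by
  have := mul_nonneg (sq_nonneg (x - 1)) (W_nonneg h0 h2)
  linarith [Q_add_eq_mul_W x]

end PStrictlyNegative

open PStrictlyNegative in
/-- The polynomial 𝒫 is strictly negative on [-√2,√2]; its maximum there is
𝒫(0) = 𝒫(±√2) = -589824 and its minimum is 𝒫(±1) = -880236. -/
theorem P_strictly_negative :
    let P : ℝ → ℝ := fun u =>
      24 * u ^ 20 - 240 * u ^ 18 - 1044 * u ^ 16 + 14112 * u ^ 14 - 6624 * u ^ 12 -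
        173952 * u ^ 10 + 193728 * u ^ 8 + 678912 * u ^ 6 - 995328 * u ^ 4 - 589824
    (∀ u : ℝ, |u| ≤ Real.sqrt 2 → P u < 0 ∧ P u ≤ -589824 ∧ -880236 ≤ P u) ∧
    P 0 = -589824 ∧ P (Real.sqrt 2) = -589824 ∧ P (-Real.sqrt 2) = -589824 ∧
    P 1 = -880236 ∧ P (-1) = -880236 := by
  intro P
  have hP : ∀ u, P u = Q (u ^ 2) := fun u => by simp only [P, Q]; ring
  have hsqrt : Real.sqrt 2 ^ 2 = 2 := Real.sq_sqrt zero_le_two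
  refine ⟨fun u hu => ?_, by norm_num [hP, Q], by norm_num [hP, hsqrt, Q],
    by norm_num [hP, hsqrt, Q], by norm_num [hP, Q], by norm_num [hP, Q]⟩
  have hu2 : u ^ 2 ≤ 2 := by
    simpa [hsqrt, sq_abs] using pow_le_pow_left₀ (abs_nonneg u) hu 2
  have hle := Q_le (sq_nonneg u) hu2
  rw [hP]
  exact ⟨hle.trans_lt (by norm_num), hle, le_Q (sq_nonneg u) hu2⟩
end
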